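/- arXiv:1009.1430 — 8 statements merged into one kernel-verified Lean document; each statement's English description precedes it below -/
import Mathlib

section
/- In L(n), if P ≥ Q (i.e. Q ⊆ P as collections of subsets), then P covers Q if and only if |P| = |Q| + 1. -/
/-- The collections of subsets of `{1,...,n}` containing `∅`, the full set and all
singletons, and closed under intersection. -/
def LnSet (n : ℕ) : Set (Set (Finset (Fin n))) :=
  {S | ∅ ∈ S ∧ Finset.univ ∈ S ∧ (∀ i : Fin n, ({i} : Finset (Fin n)) ∈ S) ∧
    ∀ a ∈ S, ∀ b ∈ S, a ∩ b ∈ S}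

/-- In `L(n)`, if `P ≥ Q` then `P` covers `Q` if and only if `|P| = |Q| + 1`. -/
theorem stmt_9 (n : ℕ) (P Q : Set (Finset (Fin n)))
    (hP : P ∈ LnSet n) (hQ : Q ∈ LnSet n) (hQP : Q ⊆ P) :
    (Q ⊂ P ∧ ∀ T ∈ LnSet n, Q ⊆ T → T ⊆ P → T = Q ∨ T = P) ↔
      P.ncard = Q.ncard + 1 := by
  constructor
  · rintro ⟨hsub, hcov⟩
    have hne : (P \ Q).Nonempty := Set.nonempty_of_ssubset hsub
    obtain ⟨a, haPQ, hmin⟩ :=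
      Set.exists_min_image (P \ Q) (fun s => s.card) (Set.toFinite _) hne
    have haP : a ∈ P := haPQ.1
    have haQ : a ∉ Q := haPQ.2
    have key : ∀ b ∈ Q, a ∩ b ∈ insert a Q := by
      intro b hb
      have hab : a ∩ b ∈ P := hP.2.2.2 a haP b (hQP hb)
      by_cases h : a ∩ b ∈ Q
      · exact Or.inr h
      · left
        have hle := hmin (a ∩ b) ⟨hab, h⟩
        exact Finset.eq_of_subset_of_card_le Finset.inter_subset_left hle
    have hT : insert a Q ∈ LnSet n := by
      refine ⟨Or.inr hQ.1, Or.inr hQ.2.1, fun i => Or.inr (hQ.2.2.1 i), ?_⟩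
      intro x hx y hy
      rcases Set.mem_insert_iff.mp hx with hx | hx <;>
        rcases Set.mem_insert_iff.mp hy with hy | hy
      · rw [hx, hy, Finset.inter_self]; exact Set.mem_insert a Q
      · rw [hx]; exact key y hy
      · rw [hy, Finset.inter_comm]; exact key x hx
      · exact Or.inr (hQ.2.2.2 x hx y hy)
    rcases hcov _ hT (Set.subset_insert a Q) (Set.insert_subset haP hQP) with hTQ | hTP
    · exact absurd (hTQ ▸ Set.mem_insert a Q) haQ
    · rw [← hTP, Set.ncard_insert_of_notMem haQ (Set.toFinite Q)]
  · intro hcard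
    have hne : Q ≠ P := fun h => by rw [h] at hcard; omega
    refine ⟨hQP.ssubset_of_ne hne, ?_⟩
    intro T hT hQT hTP
    have h1 : Q.ncard ≤ T.ncard := Set.ncard_le_ncard hQT (Set.toFinite T)
    have h2 : T.ncard ≤ P.ncard := Set.ncard_le_ncard hTP (Set.toFinite P)
    rcases eq_or_lt_of_le h1 with he | hl
    · exact Or.inl (Set.eq_of_subset_of_ncard_le hQT he.ge (Set.toFinite T)).symm
    · exact Or.inr (Set.eq_of_subset_of_ncard_le hTP (by omega) (Set.toFinite P))
end

section
/- L(n) is a graded lattice of rank 2^n − n − 2: every maximal chain in L(n) has length 2^n − n − 2. -/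
/-!
Cardinality grades `L(n)`. If `A ⊂ B` in `L(n)`, take `x ∈ B \ A` minimal for inclusion: for
`a ∈ A` the set `x ∩ a` lies in `B` below `x`, so it is either in `A` or equal to `x`, and
`A ∪ {x}` is again in `L(n)`. Hence covers in `L(n)` add exactly one set. In a bounded order
graded by `ℕ`, a maximal chain takes every grade between `grade ⊥` and `grade ⊤` exactly once,
so it has `2^n - (n + 2) + 1` elements.
-/

section GradeOrder

variable {α : Type*} [PartialOrder α] [BoundedOrder α] [GradeOrder ℕ α]

theorem range_grade_eq_Icc :
    Set.range (grade ℕ : α → ℕ) = Set.Icc (grade ℕ (⊥ : α)) (grade ℕ (⊤ : α)) := by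
  refine subset_antisymm ?_ ?_
  · rintro _ ⟨a, rfl⟩
    exact ⟨grade_mono bot_le, grade_mono le_top⟩
  rintro k ⟨hbot, htop⟩
  induction k, hbot using Nat.le_induction with
  | base => exact ⟨⊥, rfl⟩
  | succ k _ ih =>
    obtain ⟨a, rfl⟩ := ih (Nat.le_of_succ_le htop)
    have ha : ¬IsMax a := fun ha => by
      rw [ha.eq_top] at htop
      omega
    obtain ⟨b, hab⟩ := exists_covBy_of_wellFoundedLT ha
    exact ⟨b, (Nat.covBy_iff_add_one_eq.mp (hab.grade ℕ)).symm⟩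

theorem card_flag_eq_grade_top_sub_grade_bot (s : Flag α) :
    Nat.card s = grade ℕ (⊤ : α) - grade ℕ (⊥ : α) + 1 := by
  classical
  have hrange : Set.range (grade ℕ : s → ℕ) = Set.Icc (grade ℕ (⊥ : α)) (grade ℕ (⊤ : α)) :=
    range_grade_eq_Icc
  have hle : grade ℕ (⊥ : α) ≤ grade ℕ (⊤ : α) := grade_mono bot_le
  rw [← Set.ncard_range_of_injective (grade_injective (𝕆 := ℕ)), hrange, ← Finset.coe_Icc,
    Set.ncard_coe_finset, Nat.card_Icc]
  omega

end GradeOrder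

theorem InfClosed.exists_insert_of_ssubset {α : Type*} [SemilatticeInf α] [WellFoundedLT α]
    {A B : Set α} (hA : InfClosed A) (hB : InfClosed B) (hAB : A ⊂ B) :
    ∃ x ∈ B \ A, InfClosed (insert x A) := by
  obtain ⟨x, hx⟩ := exists_minimal_of_wellFoundedLT (· ∈ B \ A) (Set.nonempty_of_ssubset hAB)
  have hinf : ∀ a ∈ A, x ⊓ a ∈ insert x A := fun a ha => by
    by_cases hxa : x ⊓ a ∈ A
    · exact Or.inr hxa
    · exact Or.inl (hx.eq_of_le ⟨hB hx.prop.1 (hAB.subset ha), hxa⟩ inf_le_left)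
  refine ⟨x, hx.prop, ?_⟩
  rintro a (rfl | ha) b (rfl | hb)
  · rw [inf_idem]
    exact Set.mem_insert _ _
  · exact hinf b hb
  · rw [inf_comm]
    exact hinf a ha
  · exact Or.inr (hA ha hb)

namespace LnSet

variable {n : ℕ}

def botSet (n : ℕ) : Set (Finset (Fin n)) :=
  insert ∅ (insert Finset.univ (Set.range fun i : Fin n => {i}))

theorem mem_iff {S : Set (Finset (Fin n))} : S ∈ LnSet n ↔ botSet n ⊆ S ∧ InfClosed S := by
  simp only [LnSet, botSet, Set.mem_ofPred_eq, Set.insert_subset_iff, Set.range_subset_iff,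
    and_assoc]
  rfl

theorem infClosed_botSet : InfClosed (botSet n) := by
  rintro a (rfl | rfl | ⟨i, rfl⟩) b hb
  · rw [Finset.inf_eq_inter, Finset.empty_inter]
    exact Set.mem_insert _ _
  · rwa [Finset.inf_eq_inter, Finset.univ_inter]
  · rw [Finset.inf_eq_inter, Finset.singleton_inter]
    split_ifs
    · exact Or.inr (Or.inr ⟨i, rfl⟩)
    · exact Set.mem_insert _ _

theorem botSet_mem : botSet n ∈ LnSet n := mem_iff.mpr ⟨subset_rfl, infClosed_botSet⟩

theorem univ_mem : Set.univ ∈ LnSet n := mem_iff.mpr ⟨Set.subset_univ _, infClosed_univ⟩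

instance : BoundedOrder (LnSet n) where
  bot := ⟨botSet n, botSet_mem⟩
  bot_le S := (mem_iff.mp S.2).1
  top := ⟨Set.univ, univ_mem⟩
  le_top S := Set.subset_univ (S : Set (Finset (Fin n)))

theorem ncard_add_one_of_covBy {A B : LnSet n} (hAB : A ⋖ B) :
    (A : Set (Finset (Fin n))).ncard + 1 = (B : Set (Finset (Fin n))).ncard := by
  obtain ⟨hbotA, hA⟩ := mem_iff.mp A.2
  obtain ⟨x, hx, hxA⟩ := hA.exists_insert_of_ssubset (mem_iff.mp B.2).2 hAB.lt
  let C : LnSet n := ⟨insert x A, mem_iff.mpr ⟨hbotA.trans (Set.subset_insert _ _), hxA⟩⟩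
  have hAC : A < C := Set.ssubset_insert hx.2
  have hCB : C = B :=
    (hAB.eq_or_eq hAC.le (Set.insert_subset hx.1 hAB.le)).resolve_left hAC.ne'
  rw [← hCB]
  exact (Set.ncard_insert_of_notMem hx.2).symm

noncomputable instance : GradeOrder ℕ (LnSet n) where
  grade S := (S : Set (Finset (Fin n))).ncard
  grade_strictMono _ _ h := Set.ncard_lt_ncard h
  covBy_grade _ _ h := Nat.covBy_iff_add_one_eq.mpr (ncard_add_one_of_covBy h)

theorem grade_bot : grade ℕ (⊥ : LnSet n) = (botSet n).ncard := rfl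

theorem grade_top : grade ℕ (⊤ : LnSet n) = 2 ^ n := by
  change (Set.univ : Set (Finset (Fin n))).ncard = 2 ^ n
  rw [Set.ncard_univ, Nat.card_eq_fintype_card, Fintype.card_finset, Fintype.card_fin]

theorem ncard_botSet (hn : 2 ≤ n) : (botSet n).ncard = n + 2 := by
  have huniv : Finset.univ ∉ Set.range fun i : Fin n => ({i} : Finset (Fin n)) := by
    rintro ⟨i, hi⟩
    have hcard := congrArg Finset.card hi
    rw [Finset.card_singleton, Finset.card_univ, Fintype.card_fin] at hcard
    omega
  have hempty : ∅ ∉ insert Finset.univ (Set.range fun i : Fin n => ({i} : Finset (Fin n))) := by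
    rintro (h | ⟨i, hi⟩)
    · exact (Finset.univ_nonempty_iff.mpr ⟨⟨0, by omega⟩⟩).ne_empty h.symm
    · exact Finset.singleton_ne_empty i hi
  rw [botSet, Set.ncard_insert_of_notMem hempty, Set.ncard_insert_of_notMem huniv,
    Set.ncard_range_of_injective Finset.singleton_injective, Nat.card_eq_fintype_card,
    Fintype.card_fin]

theorem botSet_eq_univ (hn : n ≤ 1) : botSet n = Set.univ := by
  have : Subsingleton (Fin n) := Fin.subsingleton_iff_le_one.mpr hn
  refine Set.eq_univ_of_forall fun s => ?_
  obtain rfl | ⟨i, hi⟩ := s.eq_empty_or_nonempty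
  · exact Set.mem_insert _ _
  · exact Or.inr (Or.inr ⟨i, (Finset.eq_singleton_iff_unique_mem.mpr
      ⟨hi, fun j _ => Subsingleton.elim j i⟩).symm⟩)

theorem grade_top_sub_grade_bot :
    grade ℕ (⊤ : LnSet n) - grade ℕ (⊥ : LnSet n) = 2 ^ n - n - 2 := by
  obtain hn | hn := le_or_gt n 1
  · have hbot_eq_top : (⊥ : LnSet n) = ⊤ := Subtype.ext (botSet_eq_univ hn)
    rw [hbot_eq_top, Nat.sub_self]
    interval_cases n <;> rfl
  · rw [grade_top, grade_bot, ncard_botSet hn, Nat.sub_sub]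

end LnSet

/-- `L(n)` is graded of rank `2^n - n - 2`: every maximal chain has length
`2^n - n - 2`, i.e. consists of `(2^n - n - 2) + 1` elements. -/
theorem stmt_10 (n : ℕ) (c : Set (LnSet n)) (hc : IsMaxChain (· ≤ ·) c) :
    c.ncard = (2 ^ n - n - 2) + 1 := by
  rw [← Nat.card_coe_set_eq, ← LnSet.grade_top_sub_grade_bot]
  exact card_flag_eq_grade_top_sub_grade_bot (Flag.ofIsMaxChain c hc)
end

section
/- The number of meet-irreducible elements of L(n) is n(2^{n−1} − n). -/
/-!
The covers of a meet-closed family `S` are the families `insert γ S` with `γ` adjoinable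
(`γ ∉ S`, and `γ ⊓ b ∈ S` or `γ ≤ b` for every `b ∈ S`), so `S` is meet-irreducible iff it
has a unique adjoinable set `σ`. Minimal non-members are adjoinable, so every non-member
contains `σ`, and a well-founded induction shows that the non-members are closed downwards
as far as `σ`. Maximal non-members are coatoms `univ.erase i`, and there is only one of them:
a second one `univ.erase j` would make `insert j σ` adjoinable. Hence the complement of `S` is
the interval `[σ, univ.erase i]`, with `2 ≤ #σ` because `∅` and the singletons lie in `S`.
Conversely each such complement is meet-irreducible, and counting the pairs `(i, σ)` gives
`n * (2 ^ (n - 1) - n)`.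
-/

open Finset

variable {α : Type*}

section SemilatticeInf

variable [SemilatticeInf α] {s t : Set α} {a b c : α}

/-- `a` can be added to the meet-closed family `s` keeping it meet-closed
(`InfClosed.insert_iff`); the covers of `s` among meet-closed families are these `insert a s`. -/
def InfAdjoinable (s : Set α) (a : α) : Prop :=
  a ∉ s ∧ ∀ b ∈ s, a ⊓ b ∈ s ∨ a ≤ b

lemma InfClosed.insert_iff (hs : InfClosed s) :
    InfClosed (insert a s) ↔ ∀ b ∈ s, a ⊓ b ∈ s ∨ a ≤ b := by
  constructor
  · intro h b hb
    rcases h (Set.mem_insert a s) (Set.mem_insert_of_mem a hb) with hab | hab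
    · exact Or.inr (inf_eq_left.1 hab)
    · exact Or.inl hab
  · intro h
    have inf_mem : ∀ b ∈ s, a ⊓ b ∈ insert a s := fun b hb =>
      (h b hb).elim (Set.mem_insert_of_mem a) fun hab => by
        rw [inf_eq_left.2 hab]; exact Set.mem_insert a s
    rintro x (rfl | hx) y (rfl | hy)
    · simp
    · exact inf_mem y hy
    · exact inf_comm y x ▸ inf_mem x hx
    · exact Set.mem_insert_of_mem a (hs hx hy)

lemma InfClosed.infAdjoinable_of_minimal (ht : InfClosed t) (hst : s ⊆ t)
    (ha : Minimal (· ∈ t \ s) a) : InfAdjoinable s a :=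
  ⟨ha.prop.2, fun _ hb => or_iff_not_imp_left.2 fun hab =>
    (le_inf_iff.1 (ha.le_of_le ⟨ht ha.prop.1 (hst hb), hab⟩ inf_le_left)).2⟩

section WellFoundedLT

variable [WellFoundedLT α]

lemma le_of_notMem_of_forall_infAdjoinable_eq (huniq : ∀ a, InfAdjoinable s a → a = c)
    (ha : a ∉ s) : c ≤ a := by
  obtain ⟨m, hma, hm⟩ := exists_minimal_le_of_wellFoundedLT (· ∈ Set.univ \ s) a ⟨trivial, ha⟩
  exact huniq m (infClosed_univ.infAdjoinable_of_minimal (Set.subset_univ s) hm) ▸ hma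

lemma InfClosed.notMem_of_le_of_le (hs : InfClosed s)
    (huniq : ∀ a, InfAdjoinable s a → a = c) (hc : c ∉ s) (ha : a ∉ s) (hcb : c ≤ b) (hba : b ≤ a) :
    b ∉ s := by
  induction a using WellFoundedLT.induction generalizing b with
  | _ a ih =>
  intro hb
  have hadj : InfAdjoinable s a := by
    refine ⟨ha, fun d hd => or_iff_not_imp_left.2 fun had => ?_⟩
    have hcd : c ≤ a ⊓ d := le_of_notMem_of_forall_infAdjoinable_eq huniq had
    by_contra had'
    exact ih (a ⊓ d) (inf_lt_left.2 had') had (le_inf hcb (hcd.trans inf_le_right))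
      (inf_le_inf_right d hba) (hs hb hd)
  exact hc (le_antisymm (hba.trans (huniq a hadj).le) hcb ▸ hb)

end WellFoundedLT

end SemilatticeInf

section Finset

variable [DecidableEq α]

lemma card_filter_two_le_card_powerset (s : Finset α) :
    #{t ∈ s.powerset | 2 ≤ #t} = 2 ^ #s - (#s + 1) := by
  have hsmall : {t ∈ s.powerset | ¬ 2 ≤ #t} = s.powersetCard 0 ∪ s.powersetCard 1 := by
    ext t
    simp only [mem_filter, mem_powerset, mem_union, mem_powersetCard]
    grind
  have hdisj : Disjoint (s.powersetCard 0) (s.powersetCard 1) :=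
    disjoint_left.2 fun t h0 h1 => by simp_all [mem_powersetCard]
  have := card_filter_add_card_filter_not (s := s.powerset) (fun t => 2 ≤ #t)
  rw [hsmall, card_union_of_disjoint hdisj, card_powersetCard, card_powersetCard, card_powerset,
    Nat.choose_zero_right, Nat.choose_one_right] at this
  omega

variable [Fintype α] {s : Set (Finset α)} {a c : Finset α} {i j : α}

lemma subset_univ_erase_iff : a ⊆ univ.erase i ↔ i ∉ a := by
  simp [subset_erase]

lemma InfClosed.exists_subset_univ_erase_notMem (hs : InfClosed s) (huniv : univ ∈ s)
    (ha : a ∉ s) : ∃ i, a ⊆ univ.erase i ∧ univ.erase i ∉ s := by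
  obtain ⟨τ, haτ, hτ⟩ := Finite.exists_le_maximal (p := (· ∉ s)) ha
  have insert_mem : ∀ k ∉ τ, insert k τ ∈ s := fun k hk => by
    by_contra h
    exact hk (hτ.le_of_ge h (subset_insert k τ) (mem_insert_self k τ))
  obtain ⟨i, hi⟩ : ∃ i, i ∉ τ := by
    by_contra! h
    exact hτ.prop (eq_univ_of_forall h ▸ huniv)
  refine ⟨i, haτ.trans (subset_univ_erase_iff.2 hi), ?_⟩
  -- `τ` misses only `i`: missing also `k` would make `τ` the meet of `insert i τ` and `insert k τ`.
  convert hτ.prop using 2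
  ext k
  simp only [mem_erase, mem_univ, and_true]
  refine ⟨fun hki => by_contra fun hk => hτ.prop ?_, fun hk hki => hi (hki ▸ hk)⟩
  convert hs (insert_mem k hk) (insert_mem i hi) using 1
  ext x
  simp only [inf_eq_inter, mem_inter, mem_insert]
  grind

lemma InfClosed.eq_of_univ_erase_notMem (hs : InfClosed s) (hc : InfAdjoinable s c)
    (huniq : ∀ a, InfAdjoinable s a → a = c) (hi : univ.erase i ∉ s) (hj : univ.erase j ∉ s) :
    i = j := by
  by_contra hij
  have hci : c ⊆ univ.erase i := le_of_notMem_of_forall_infAdjoinable_eq huniq hi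
  have hcj : c ⊆ univ.erase j := le_of_notMem_of_forall_infAdjoinable_eq huniq hj
  have hadj : InfAdjoinable s (insert j c) := by
    refine ⟨hs.notMem_of_le_of_le huniq hc.1 hi (subset_insert j c)
      (insert_subset (by simp [Ne.symm hij]) hci), fun d hd => or_iff_not_imp_left.2 fun h => ?_⟩
    have hcd : c ⊆ d := (le_of_notMem_of_forall_infAdjoinable_eq huniq h).trans inf_le_right
    by_cases hjd : j ∈ d
    · exact insert_subset hjd hcd
    · exact absurd hd (hs.notMem_of_le_of_le huniq hc.1 hj hcd (subset_univ_erase_iff.2 hjd))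
  exact subset_univ_erase_iff.1 hcj (huniq _ hadj ▸ mem_insert_self j c)

theorem InfClosed.exists_eq_compl_Icc_univ_erase (hs : InfClosed s) (huniv : univ ∈ s)
    (hc : InfAdjoinable s c) (huniq : ∀ a, InfAdjoinable s a → a = c) :
    ∃ i, c ⊆ univ.erase i ∧ s = (Set.Icc c (univ.erase i))ᶜ := by
  obtain ⟨i, hci, hi⟩ := hs.exists_subset_univ_erase_notMem huniv hc.1
  refine ⟨i, hci, Set.ext fun a => ⟨fun has ⟨hca, hai⟩ =>
    hs.notMem_of_le_of_le huniq hc.1 hi hca hai has, fun ha => by_contra fun has => ha ?_⟩⟩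
  obtain ⟨j, haj, hj⟩ := hs.exists_subset_univ_erase_notMem huniv has
  exact ⟨le_of_notMem_of_forall_infAdjoinable_eq huniq has,
    hs.eq_of_univ_erase_notMem hc huniq hi hj ▸ haj⟩

lemma infClosed_compl_Icc_univ_erase (c : Finset α) (i : α) :
    InfClosed (Set.Icc c (univ.erase i))ᶜ := by
  intro a ha b hb ⟨hcab, habi⟩
  rw [inf_eq_inter, subset_univ_erase_iff, mem_inter, not_and_or] at habi
  rw [inf_eq_inter, subset_inter_iff] at hcab
  rcases habi with hia | hib
  · exact ha ⟨hcab.1, subset_univ_erase_iff.2 hia⟩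
  · exact hb ⟨hcab.2, subset_univ_erase_iff.2 hib⟩

lemma infAdjoinable_compl_Icc_univ_erase_iff (hci : c ⊆ univ.erase i) :
    InfAdjoinable (Set.Icc c (univ.erase i))ᶜ a ↔ a = c := by
  constructor
  · rintro ⟨ha, hadj⟩
    rw [Set.notMem_compl_iff] at ha
    refine ha.1.antisymm' fun j hja => by_contra fun hjc => ?_
    have hij : i ≠ j := fun h => subset_univ_erase_iff.1 ha.2 (h ▸ hja)
    -- Meeting `a` with the coatom `univ.erase j` stays in the interval but leaves `a`.
    rcases hadj (univ.erase j) fun h => subset_univ_erase_iff.1 h.2 (mem_erase.2 ⟨hij, mem_univ i⟩)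
      with h | h
    · rw [inf_eq_inter, inter_erase, inter_univ] at h
      exact h ⟨fun x hx => mem_erase.2 ⟨fun h => hjc (h ▸ hx), ha.1 hx⟩,
        (erase_subset j a).trans ha.2⟩
    · exact subset_univ_erase_iff.1 h hja
  · rintro rfl
    exact ⟨not_not.2 ⟨le_rfl, hci⟩, fun b _ => or_iff_not_imp_left.2 fun h =>
      (not_not.1 h).1.trans inf_le_right⟩

lemma injOn_compl_Icc_univ_erase :
    Set.InjOn (fun p : (_ : α) × Finset α => (Set.Icc p.2 (univ.erase p.1))ᶜ)
      {p | p.2 ⊆ univ.erase p.1} := by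
  rintro ⟨i, σ⟩ hi ⟨j, τ⟩ - h
  obtain ⟨rfl, he⟩ := (Set.Icc_eq_Icc_iff hi).1 (compl_inj_iff.1 h)
  rw [erase_inj _ (mem_univ i)] at he
  subst he
  rfl

end Finset

section LnSet

variable {n : ℕ} {S T : Set (Finset (Fin n))} {γ : Finset (Fin n)}

lemma infClosed_of_mem_lnSet (hS : S ∈ LnSet n) : InfClosed S := hS.2.2.2

lemma insert_mem_lnSet_iff (hS : S ∈ LnSet n) :
    insert γ S ∈ LnSet n ↔ ∀ b ∈ S, γ ⊓ b ∈ S ∨ γ ≤ b := by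
  refine ⟨fun h => (infClosed_of_mem_lnSet hS).insert_iff.1 (infClosed_of_mem_lnSet h),
    fun h => ⟨Set.mem_insert_of_mem γ hS.1, Set.mem_insert_of_mem γ hS.2.1,
      fun i => Set.mem_insert_of_mem γ (hS.2.2.1 i), (infClosed_of_mem_lnSet hS).insert_iff.2 h⟩⟩

lemma covers_in_lnSet_iff (hS : S ∈ LnSet n) :
    (T ∈ LnSet n ∧ S ⊂ T ∧ ∀ U ∈ LnSet n, S ⊆ U → U ⊆ T → U = S ∨ U = T) ↔
      ∃ γ, InfAdjoinable S γ ∧ T = insert γ S := by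
  constructor
  · rintro ⟨hT, hST, hcov⟩
    obtain ⟨γ, hγ⟩ := (T \ S).toFinite.exists_minimal (Set.nonempty_of_ssubset hST)
    have hadj := (infClosed_of_mem_lnSet hT).infAdjoinable_of_minimal hST.subset hγ
    refine ⟨γ, hadj, ((hcov _ ((insert_mem_lnSet_iff hS).2 hadj.2) (Set.subset_insert γ S)
      (Set.insert_subset hγ.prop.1 hST.subset)).resolve_left fun h =>
        hadj.1 (h ▸ Set.mem_insert γ S)).symm⟩
  · rintro ⟨γ, hγ, rfl⟩
    have hcov := Set.covBy_insert hγ.1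
    refine ⟨(insert_mem_lnSet_iff hS).2 hγ.2, hcov.lt, fun U _ hSU hUT => ?_⟩
    rcases hSU.eq_or_lt with h | h
    · exact Or.inl h.symm
    · exact Or.inr (hUT.eq_of_not_lt (hcov.2 h))

lemma existsUnique_cover_in_lnSet_iff (hS : S ∈ LnSet n) :
    (∃! T, T ∈ LnSet n ∧ S ⊂ T ∧ ∀ U ∈ LnSet n, S ⊆ U → U ⊆ T → U = S ∨ U = T) ↔
      ∃! γ, InfAdjoinable S γ := by
  simp only [covers_in_lnSet_iff hS]
  constructor
  · rintro ⟨_, ⟨γ, hγ, rfl⟩, hT⟩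
    refine ⟨γ, hγ, fun γ' hγ' => ?_⟩
    have hmem : γ' ∈ insert γ S := hT _ ⟨γ', hγ', rfl⟩ ▸ Set.mem_insert γ' S
    exact hmem.resolve_right hγ'.1
  · rintro ⟨γ, hγ, huniq⟩
    exact ⟨insert γ S, ⟨γ, hγ, rfl⟩, by rintro _ ⟨γ', hγ', rfl⟩; rw [huniq γ' hγ']⟩

lemma two_le_card_of_notMem_lnSet (hS : S ∈ LnSet n) (hγ : γ ∉ S) : 2 ≤ #γ := by
  by_contra! h
  obtain h | h : #γ = 0 ∨ #γ = 1 := by omega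
  · exact hγ (card_eq_zero.1 h ▸ hS.1)
  · obtain ⟨j, rfl⟩ := card_eq_one.1 h
    exact hγ (hS.2.2.1 j)

lemma compl_Icc_univ_erase_mem_lnSet {σ : Finset (Fin n)} (i : Fin n) (hσ : 2 ≤ #σ) :
    (Set.Icc σ (univ.erase i))ᶜ ∈ LnSet n := by
  have small_mem : ∀ γ : Finset (Fin n), #γ ≤ 1 → γ ∈ (Set.Icc σ (univ.erase i))ᶜ :=
    fun γ hγ h => by have := card_le_card h.1; omega
  exact ⟨small_mem ∅ (by simp), fun h => subset_univ_erase_iff.1 h.2 (mem_univ i),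
    fun j => small_mem {j} (by simp), infClosed_compl_Icc_univ_erase σ i⟩

theorem meetIrreducible_lnSet_iff :
    (S ∈ LnSet n ∧
      ∃! T, T ∈ LnSet n ∧ S ⊂ T ∧ ∀ U ∈ LnSet n, S ⊆ U → U ⊆ T → U = S ∨ U = T) ↔
    ∃ i σ, σ ⊆ univ.erase i ∧ 2 ≤ #σ ∧ (Set.Icc σ (univ.erase i))ᶜ = S := by
  constructor
  · rintro ⟨hS, hcov⟩
    obtain ⟨σ, hσ, huniq⟩ := (existsUnique_cover_in_lnSet_iff hS).1 hcov
    obtain ⟨i, hσi, rfl⟩ :=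
      (infClosed_of_mem_lnSet hS).exists_eq_compl_Icc_univ_erase hS.2.1 hσ huniq
    exact ⟨i, σ, hσi, two_le_card_of_notMem_lnSet hS hσ.1, rfl⟩
  · rintro ⟨i, σ, hσi, hσ, rfl⟩
    have hS := compl_Icc_univ_erase_mem_lnSet i hσ
    exact ⟨hS, (existsUnique_cover_in_lnSet_iff hS).2
      ⟨σ, (infAdjoinable_compl_Icc_univ_erase_iff hσi).2 rfl,
        fun _ => (infAdjoinable_compl_Icc_univ_erase_iff hσi).1⟩⟩

end LnSet

/-- The number of meet-irreducible elements of `L(n)` (elements covered by exactly one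
element of `L(n)`) is `n * (2^(n-1) - n)`. -/
theorem stmt_11 (n : ℕ) :
    {S : Set (Finset (Fin n)) | S ∈ LnSet n ∧
      ∃! T : Set (Finset (Fin n)), T ∈ LnSet n ∧ S ⊂ T ∧
        ∀ U ∈ LnSet n, S ⊆ U → U ⊆ T → U = S ∨ U = T}.ncard
      = n * (2 ^ (n - 1) - n) := by
  set pairs := univ.sigma fun i : Fin n => {σ ∈ (univ.erase i).powerset | 2 ≤ #σ}
  have hmeetIrr : {S : Set (Finset (Fin n)) | S ∈ LnSet n ∧
      ∃! T : Set (Finset (Fin n)), T ∈ LnSet n ∧ S ⊂ T ∧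
        ∀ U ∈ LnSet n, S ⊆ U → U ⊆ T → U = S ∨ U = T} =
      (fun p : (_ : Fin n) × Finset (Fin n) => (Set.Icc p.2 (univ.erase p.1))ᶜ) '' pairs := by
    ext S
    simp [meetIrreducible_lnSet_iff, pairs, and_assoc]
  have hcard : ∀ i : Fin n, #{σ ∈ (univ.erase i).powerset | 2 ≤ #σ} = 2 ^ (n - 1) - n := by
    intro i
    rw [card_filter_two_le_card_powerset, card_erase_of_mem (mem_univ i), card_univ,
      Fintype.card_fin, Nat.sub_add_cancel i.pos]
  rw [hmeetIrr, Set.InjOn.ncard_image (injOn_compl_Icc_univ_erase.mono fun p hp => ?_),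
    Set.ncard_coe_finset, card_sigma, sum_congr rfl fun i _ => hcard i, sum_const, card_univ,
    Fintype.card_fin, smul_eq_mul]
  exact mem_powerset.1 (mem_filter.1 (mem_sigma.1 hp).2).1
end

section
/- For each i ∈ {1,...,n} and each subset σ ⊆ {1,...,n}\{i} with |σ| ≥ 2, the collection L_{i,σ} = P({1,...,n}) \ {γ : σ ⊆ γ ⊆ {1,...,n}\{i}} is closed under intersection and contains ∅, all singletons, and {1,...,n}; that is, L_{i,σ} ∈ L(n). -/
namespace InfPrime

variable {α : Type*} {a b : α}

theorem inf_notMem_Icc [SemilatticeInf α] (hb : InfPrime b) {x y : α}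
    (hx : x ∉ Set.Icc a b) (hy : y ∉ Set.Icc a b) : x ⊓ y ∉ Set.Icc a b := by
  rintro ⟨hax, hxyb⟩
  rcases hb.inf_le.1 hxyb with hxb | hyb
  · exact hx ⟨hax.trans inf_le_left, hxb⟩
  · exact hy ⟨hax.trans inf_le_right, hyb⟩

theorem top_notMem_Icc [SemilatticeInf α] [OrderTop α] (hb : InfPrime b) :
    (⊤ : α) ∉ Set.Icc a b :=
  fun h => hb.ne_top (top_le_iff.1 h.2)

end InfPrime

theorem Finset.infPrime_univ_erase {α : Type*} [Fintype α] [DecidableEq α] (i : α) :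
    InfPrime (univ.erase i) := by
  refine ⟨fun hmax => ?_, fun {b c} hbc => ?_⟩
  · exact notMem_erase i univ (hmax (subset_univ _) (mem_univ i))
  · simp only [subset_erase, subset_univ, true_and, inf_eq_inter, mem_inter, not_and_or] at hbc ⊢
    exact hbc

theorem Finset.notMem_Icc_of_card_lt {α : Type*} {s t u : Finset α} (h : u.card < s.card) :
    u ∉ Set.Icc s t :=
  fun hu => (card_le_card hu.1).not_gt h

theorem stmt_12_general (n : ℕ) (i : Fin n) (σ : Finset (Fin n))
    (hσ : 2 ≤ σ.card) :
    {γ : Finset (Fin n) | ¬ (σ ⊆ γ ∧ γ ⊆ Finset.univ.erase i)} ∈ LnSet n := by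
  show (Set.Icc σ (Finset.univ.erase i))ᶜ ∈ LnSet n
  have hprime := Finset.infPrime_univ_erase i
  refine ⟨Finset.notMem_Icc_of_card_lt (by rw [Finset.card_empty]; omega), hprime.top_notMem_Icc,
    fun j => Finset.notMem_Icc_of_card_lt (by rw [Finset.card_singleton]; omega),
    fun a ha b hb => hprime.inf_notMem_Icc ha hb⟩

/-- For `i ∉ σ` and `|σ| ≥ 2`, the collection
`L_{i,σ} = P({1,...,n}) \ [σ, {1,...,n}\{i}]` is an element of `L(n)`. -/
theorem stmt_12 (n : ℕ) (i : Fin n) (σ : Finset (Fin n))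
    (hiσ : i ∉ σ) (hσ : 2 ≤ σ.card) :
    {γ : Finset (Fin n) | ¬ (σ ⊆ γ ∧ γ ⊆ Finset.univ.erase i)} ∈ LnSet n :=
  stmt_12_general n i σ hσ
end

section
/- Each collection L_{i,σ} = P({1,...,n}) \ {γ : σ ⊆ γ ⊆ {1,...,n}\{i}} (with |σ| ≥ 2, i ∉ σ) is meet-irreducible in L(n): the unique element of L(n) covering L_{i,σ} is L_{i,σ} ∪ {σ}. -/
open Finset

theorem Set.inf_mem_insert_compl_Icc {α : Type*} [SemilatticeInf α] {σ τ : α}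
    (hτ : ∀ ⦃a b : α⦄, a ⊓ b ≤ τ → a ≤ τ ∨ b ≤ τ) {a b : α}
    (ha : a ∈ insert σ (Set.Icc σ τ)ᶜ) (hb : b ∈ insert σ (Set.Icc σ τ)ᶜ) :
    a ⊓ b ∈ insert σ (Set.Icc σ τ)ᶜ := by
  by_contra hab
  obtain ⟨hσab, habτ⟩ : a ⊓ b ∈ Set.Icc σ τ := by
    by_contra h
    exact hab (Set.mem_insert_of_mem _ h)
  have hσa : σ ≤ a := hσab.trans inf_le_left
  have hσb : σ ≤ b := hσab.trans inf_le_right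
  refine hab (Set.mem_insert_iff.mpr (Or.inl (le_antisymm ?_ hσab)))
  rcases hτ habτ with haτ | hbτ
  · obtain rfl : a = σ := by simpa [hσa, haτ] using ha
    exact inf_le_left
  · obtain rfl : b = σ := by simpa [hσb, hbτ] using hb
    exact inf_le_right

theorem Finset.sdiff_mem_of_inter_mem {α : Type*} [Fintype α] [DecidableEq α]
    {T : Set (Finset α)} (hT : ∀ a ∈ T, ∀ b ∈ T, a ∩ b ∈ T) {γ : Finset α} (hγ : γ ∈ T)
    {s : Finset α} (hs : ∀ j ∈ s, univ.erase j ∈ T) : γ \ s ∈ T := by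
  induction s using Finset.induction_on with
  | empty => simpa using hγ
  | insert j s _ ih =>
    have hdiff : γ \ insert j s = (γ \ s) ∩ univ.erase j := by
      ext x
      simp only [mem_sdiff, mem_insert, mem_inter, mem_erase, mem_univ, and_true]
      tauto
    rw [hdiff]
    exact hT _ (ih fun k hk => hs k (mem_insert_of_mem hk)) _ (hs j (mem_insert_self j s))

theorem Finset.mem_of_compl_Icc_ssubset {α : Type*} [Fintype α] [DecidableEq α]
    {T : Set (Finset α)} (hT : ∀ a ∈ T, ∀ b ∈ T, a ∩ b ∈ T) {i : α} {σ : Finset α}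
    (hLT : (Set.Icc σ (univ.erase i))ᶜ ⊂ T) : σ ∈ T := by
  obtain ⟨γ, hγT, hγ⟩ := Set.exists_of_ssubset hLT
  obtain ⟨hσγ, hγi⟩ : σ ⊆ γ ∧ γ ⊆ univ.erase i := by simpa using hγ
  rw [← sdiff_sdiff_eq_self hσγ]
  refine sdiff_mem_of_inter_mem hT hγT fun j hj => hLT.subset ?_
  have hji : j ≠ i := ne_of_mem_erase (hγi (mem_sdiff.mp hj).1)
  simp [subset_erase, hji.symm]

theorem insert_compl_Icc_mem_LnSet {n : ℕ} {i : Fin n} {σ : Finset (Fin n)} (hσ : 2 ≤ σ.card) :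
    insert σ (Set.Icc σ (univ.erase i))ᶜ ∈ LnSet n := by
  refine ⟨?_, ?_, fun j => ?_, fun a ha b hb => ?_⟩
  · refine Set.mem_insert_of_mem _ fun ⟨h, _⟩ => ?_
    simp [subset_empty.mp h] at hσ
  · exact Set.mem_insert_of_mem _ fun ⟨_, h⟩ => by simpa using h (mem_univ i)
  · refine Set.mem_insert_of_mem _ fun ⟨h, _⟩ => ?_
    simpa using hσ.trans (card_le_card h)
  · refine Set.inf_mem_insert_compl_Icc (fun a b h => ?_) ha hb
    simp only [inf_eq_inter, subset_erase, subset_univ, true_and, mem_inter] at h ⊢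
    tauto

/-- `L_{i,σ}` is meet-irreducible in `L(n)`: its unique cover is `L_{i,σ} ∪ {σ}`. -/
theorem stmt_13 (n : ℕ) (i : Fin n) (σ : Finset (Fin n))
    (hiσ : i ∉ σ) (hσ : 2 ≤ σ.card)
    (L : Set (Finset (Fin n)))
    (hL : L = {γ : Finset (Fin n) | ¬ (σ ⊆ γ ∧ γ ⊆ Finset.univ.erase i)}) :
    insert σ L ∈ LnSet n ∧
    (L ⊂ insert σ L ∧ ∀ U ∈ LnSet n, L ⊆ U → U ⊆ insert σ L → U = L ∨ U = insert σ L) ∧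
    (∀ T ∈ LnSet n, (L ⊂ T ∧ ∀ U ∈ LnSet n, L ⊆ U → U ⊆ T → U = L ∨ U = T) →
      T = insert σ L) := by
  obtain rfl : L = (Set.Icc σ (univ.erase i))ᶜ := hL
  have hσL : σ ∉ (Set.Icc σ (univ.erase i))ᶜ := by simpa [subset_erase] using hiσ
  have hmem := insert_compl_Icc_mem_LnSet (i := i) hσ
  have hcov := Set.covBy_insert hσL
  refine ⟨hmem, ⟨hcov.lt, fun U _ hLU hUσ => hcov.wcovBy.eq_or_eq hLU hUσ⟩, ?_⟩
  rintro T hT ⟨hLT, hTcov⟩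
  have hσT : σ ∈ T := mem_of_compl_Icc_ssubset hT.2.2.2 hLT
  rcases hTcov _ hmem (Set.subset_insert _ _) (Set.insert_subset hσT hLT.subset) with h | h
  · exact absurd (h ▸ Set.mem_insert σ _) hσL
  · exact h.symm
end

section
/- Let M be a monomial ideal with minimal monomial generators m₁,...,mₙ and let P be its LCM lattice. For every element p of P that is meet-irreducible, the monomial m_p := gcd{ t̄ : t > p } / p̄ is not equal to 1, where t̄ denotes the monomial labeling the lattice element t. -/
/-!
If the gcd of the elements strictly above `p` were `p` itself, then for every variable some
element above `p` would agree with `p` in that exponent. Meet-irreducibility lets us meet these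
finitely many witnesses inside the lattice while staying strictly above `p`, producing an
element strictly above `p` that agrees with `p` everywhere, which is absurd.
-/

open Finset

def lcmLattice {ι β : Type*} [SemilatticeSup β] [OrderBot β] (m : ι → β) : Set β :=
  {v | v = ⊥ ∨ ∃ s : Finset ι, s.Nonempty ∧ v = s.sup m}

section LcmLattice

variable {ι β : Type*} [Fintype ι] [SemilatticeSup β] [OrderBot β] (m : ι → β)

theorem univ_sup_mem_lcmLattice : univ.sup m ∈ lcmLattice m := by
  rcases (univ : Finset ι).eq_empty_or_nonempty with h | h
  · exact Or.inl (by rw [h, sup_empty])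
  · exact Or.inr ⟨univ, h, rfl⟩

theorem le_univ_sup_of_mem_lcmLattice {v : β} (hv : v ∈ lcmLattice m) : v ≤ univ.sup m := by
  rcases hv with rfl | ⟨s, -, rfl⟩
  · exact bot_le
  · exact sup_mono (subset_univ s)

end LcmLattice

theorem exists_forall_gt_ne_of_directed {ι α : Type*} [Fintype ι] [PartialOrder α]
    {S : Set (ι → α)} {p : ι → α} (hne : ∃ t ∈ S, p < t)
    (hdir : ∀ a ∈ S, ∀ b ∈ S, p < a → p < b → ∃ c ∈ S, c ≤ a ∧ c ≤ b ∧ p < c) :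
    ∃ j, ∀ t ∈ S, p < t → t j ≠ p j := by
  classical
  by_contra! hcoord
  have agree : ∀ s : Finset ι, ∃ c ∈ S, p < c ∧ ∀ j ∈ s, c j = p j := by
    intro s
    induction s using Finset.induction_on with
    | empty => obtain ⟨t, ht, hpt⟩ := hne; exact ⟨t, ht, hpt, by simp⟩
    | @insert j s _ ih =>
      obtain ⟨c, hc, hpc, hcs⟩ := ih
      obtain ⟨t, ht, hpt, htj⟩ := hcoord j
      obtain ⟨d, hd, hdc, hdt, hpd⟩ := hdir c hc t ht hpc hpt
      refine ⟨d, hd, hpd, fun i hi => le_antisymm ?_ (hpd.le i)⟩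
      rcases mem_insert.mp hi with rfl | hi
      · exact htj ▸ hdt i
      · exact hcs i hi ▸ hdc i
  obtain ⟨c, -, hpc, hc⟩ := agree univ
  exact hpc.ne' (funext fun j => hc j (mem_univ j))

theorem sInf_apply_ne_of_forall_gt_ne {ι : Type*} {S : Set (ι → ℕ)} {p : ι → ℕ} {j : ι}
    (hne : ∃ t ∈ S, p < t) (hj : ∀ t ∈ S, p < t → t j ≠ p j) :
    sInf {x : ℕ | ∃ t ∈ S, p < t ∧ t j = x} ≠ p j := by
  obtain ⟨t₀, ht₀, hpt₀⟩ := hne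
  obtain ⟨t, ht, hpt, htj⟩ :=
    Nat.sInf_mem (s := {x : ℕ | ∃ t ∈ S, p < t ∧ t j = x}) ⟨t₀ j, t₀, ht₀, hpt₀, rfl⟩
  exact htj ▸ hj t ht hpt

theorem stmt_14_general (k n : ℕ) (m : Fin n → (Fin k → ℕ))
    (L : Set (Fin k → ℕ))
    (hL : L = {v | v = 0 ∨ ∃ s : Finset (Fin n), s.Nonempty ∧ v = s.sup m})
    (p : Fin k → ℕ) (hp : p ∈ L)
    (hpmax : p ≠ Finset.univ.sup m)
    (hMI : ∀ a ∈ L, ∀ b ∈ L, p < a → p < b → ∃ c ∈ L, c ≤ a ∧ c ≤ b ∧ p < c) :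
    (fun j => sInf {x : ℕ | ∃ t ∈ L, p < t ∧ t j = x}) ≠ p := by
  -- `0` and `⊥` agree definitionally on `Fin k → ℕ`.
  replace hL : L = lcmLattice m := hL
  subst hL
  have htop : ∃ t ∈ lcmLattice m, p < t :=
    ⟨_, univ_sup_mem_lcmLattice m, (le_univ_sup_of_mem_lcmLattice m hp).lt_of_ne hpmax⟩
  obtain ⟨j, hj⟩ := exists_forall_gt_ne_of_directed htop hMI
  exact fun h => sInf_apply_ne_of_forall_gt_ne htop hj (congrFun h j)

/-- Monomials in `k` variables are modeled as exponent vectors `Fin k → ℕ`;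
divisibility is the pointwise order, lcm is pointwise `sup`, the monomial `1` is `0`.
The LCM lattice of the monomial ideal generated by `m 0, ..., m (n-1)` consists of `1`
together with the lcms of nonempty subsets of generators.

If `p` is a meet-irreducible element of the LCM lattice of a monomial ideal with minimal
generators `m i`, then `m_p = gcd{ t : t > p } / p ≠ 1`; equivalently, the pointwise gcd
of the elements strictly above `p` is different from `p`. -/
theorem stmt_14 (k n : ℕ) (m : Fin n → (Fin k → ℕ))
    (hmin : ∀ i j : Fin n, i ≠ j → ¬ m i ≤ m j)
    (L : Set (Fin k → ℕ))
    (hL : L = {v | v = 0 ∨ ∃ s : Finset (Fin n), s.Nonempty ∧ v = s.sup m})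
    (p : Fin k → ℕ) (hp : p ∈ L)
    (hpmax : p ≠ Finset.univ.sup m)
    (hMI : ∀ a ∈ L, ∀ b ∈ L, p < a → p < b → ∃ c ∈ L, c ≤ a ∧ c ≤ b ∧ p < c) :
    (fun j => sInf {x : ℕ | ∃ t ∈ L, p < t ∧ t j = x}) ≠ p :=
  stmt_14_general k n m L hL p hp hpmax hMI
end

section
/- Let P be a finite atomic lattice and let M = {m_p} be a labeling of elements of P by monomials such that (1) every meet-irreducible element has a non-trivial label, and (2) whenever gcd(m_p, m_q) ≠ 1, p and q are comparable. Define f(b) = ∏_{p ∈ ⌈b⌉^c} m_p for b ∈ P. Then f(b) = lcm{ f(a) : a an atom, a ≤ b } for every b ∈ P. -/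
/-!
Since `⌈a⌉ᶜ ⊆ ⌈b⌉ᶜ` whenever `a ≤ b`, `f a ≤ f b` for every atom `a ≤ b`. Conversely, work one
variable `xᵢ` at a time: by (2) the elements whose label involves `xᵢ` form a chain, so those
outside `⌈b⌉` have a greatest element `q`. As `b ≰ q` and `b` is the join of the atoms below
it, some atom `a ≤ b` has `a ≰ q`; then `⌈a⌉ᶜ` contains every element `≤ q`, so the exponent
of `xᵢ` in `f a` is at least that in `f b`.
-/

open Finset

section

open scoped Classical

variable {P M : Type*} [Fintype P]

lemma sum_filter_not_le_mono [Preorder P] [AddCommMonoid M] [PartialOrder M]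
    [CanonicallyOrderedAdd M] (g : P → M) {a b : P} (hab : a ≤ b) :
    ∑ p with ¬a ≤ p, g p ≤ ∑ p with ¬b ≤ p, g p :=
  sum_le_sum_of_subset <| monotone_filter_right _ fun _ _ hap hbp => hap (hab.trans hbp)

lemma sum_filter_not_le_le_sup_of_isChain [PartialOrder P] (g : P → ℕ)
    (hg : IsChain (· ≤ ·) {p | g p ≠ 0}) {S : Finset P} {b : P} (hb : IsLUB (S : Set P) b) :
    ∑ p with ¬b ≤ p, g p ≤ S.sup fun a => ∑ p with ¬a ≤ p, g p := by
  rw [← sum_filter_ne_zero]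
  set T := {p ∈ ({p | ¬b ≤ p} : Finset P) | g p ≠ 0}
  obtain hT | ⟨q, hqT⟩ := T.eq_empty_or_nonempty
  · simp [hT]
  obtain ⟨q, hq⟩ := T.exists_maximal ⟨q, hqT⟩
  have hqb : ¬b ≤ q := by simpa using (mem_filter.1 hq.prop).1
  have hle_q : ∀ p ∈ T, p ≤ q := by
    intro p hp
    obtain hpq | hqp := hg.total (mem_filter.1 hp).2 (mem_filter.1 hq.prop).2
    · exact hpq
    · exact hq.le_of_ge hp hqp
  obtain ⟨a, haS, haq⟩ : ∃ a ∈ S, ¬a ≤ q := by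
    by_contra! h
    exact hqb (hb.2 h)
  calc ∑ p ∈ T, g p ≤ ∑ p with ¬a ≤ p, g p :=
        sum_le_sum_of_subset fun p hp =>
          mem_filter.2 ⟨mem_univ p, fun hap => haq (hap.trans (hle_q p hp))⟩
    _ ≤ S.sup fun a => ∑ p with ¬a ≤ p, g p :=
        le_sup (f := fun a => ∑ p with ¬a ≤ p, g p) haS

end

open Classical in
theorem stmt_16_general (k : ℕ) (P : Type) [Fintype P] [Lattice P] [OrderBot P]
    (hatomic : ∀ b : P, IsLUB {a : P | IsAtom a ∧ a ≤ b} b)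
    (m : P → (Fin k → ℕ))
    (h2 : ∀ p q : P, m p ⊓ m q ≠ 0 → p ≤ q ∨ q ≤ p)
    (f : P → (Fin k → ℕ))
    (hf : ∀ b : P, f b = ∑ p ∈ Finset.univ.filter (fun p : P => ¬ b ≤ p), m p) :
    ∀ b : P, f b = (Finset.univ.filter (fun a : P => IsAtom a ∧ a ≤ b)).sup f := by
  obtain rfl : f = fun b => ∑ p with ¬b ≤ p, m p := funext hf
  intro b
  refine le_antisymm (fun i => ?_) <|
    Finset.sup_le fun a ha => sum_filter_not_le_mono m (mem_filter.1 ha).2.2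
  have hchain : IsChain (· ≤ ·) {p | m p i ≠ 0} := fun p hp q hq _ =>
    h2 p q fun h => (Nat.min_eq_zero_iff.1 (congrFun h i)).elim hp hq
  have hb : IsLUB (({a | IsAtom a ∧ a ≤ b} : Finset P) : Set P) b := by
    simpa only [coe_filter, mem_univ, true_and] using hatomic b
  simpa only [Finset.sum_apply, Finset.sup_apply] using
    sum_filter_not_le_le_sup_of_isChain (fun p => m p i) hchain hb

open Classical in
/-- Let `P` be a finite atomic lattice with a monomial labeling `m` (monomials in `k`
variables as exponent vectors `Fin k → ℕ`, with the trivial label `1` being `0`,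
products of monomials being sums of vectors and lcm being pointwise `sup`) such that
(1) every meet-irreducible element is non-trivially labeled, and
(2) any two elements whose labels share a variable are comparable.
Then `f b = ∏_{p ∈ ⌈b⌉ᶜ} m p` satisfies `f b = lcm { f a : a an atom, a ≤ b }`. -/
theorem stmt_16 (k : ℕ) (P : Type) [Fintype P] [Lattice P] [OrderBot P]
    (hatomic : ∀ b : P, IsLUB {a : P | IsAtom a ∧ a ≤ b} b)
    (m : P → (Fin k → ℕ))
    (h1 : ∀ p : P, (∀ a b : P, p < a → p < b → a ⊓ b ≠ p) → m p ≠ 0)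
    (h2 : ∀ p q : P, m p ⊓ m q ≠ 0 → p ≤ q ∨ q ≤ p)
    (f : P → (Fin k → ℕ))
    (hf : ∀ b : P, f b = ∑ p ∈ Finset.univ.filter (fun p : P => ¬ b ≤ p), m p) :
    ∀ b : P, f b = (Finset.univ.filter (fun a : P => IsAtom a ∧ a ≤ b)).sup f :=
  stmt_16_general k P hatomic m h2 f hf
end

section
/- Let P be a finite atomic lattice with a monomial labeling M satisfying: every meet-irreducible is labeled by a monomial ≠ 1, and any two elements whose labels share a common variable are comparable. Define f(b) = ∏_{p : b ≰ p} m_p. Then f is injective on P. -/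
/-!
Suppose `f a ≤ f b` (i.e. `f a ∣ f b`) but `a ≰ b`. A `p` maximal among the elements above `b`
but not above `a` is meet-irreducible, so its label contains some variable `xᵢ`. Any `q` with
`b ≰ q` whose label also contains `xᵢ` is comparable with `p`, which forces `a ≰ q`; together
with `p` itself this makes the `xᵢ`-exponent of `f a` strictly larger than that of `f b`.
-/

open Finset

theorem exists_infIrred_of_not_le {α : Type*} [Lattice α] [WellFoundedGT α] {a b : α}
    (h : ¬a ≤ b) : ∃ p, InfIrred p ∧ b ≤ p ∧ ¬a ≤ p := by
  obtain ⟨p, ⟨hbp, hap⟩, hmax⟩ :=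
    exists_maximal_of_wellFoundedGT (fun q => b ≤ q ∧ ¬a ≤ q) ⟨b, le_rfl, h⟩
  have above_of_gt : ∀ z, p ≤ z → z ≠ p → a ≤ z := fun z hpz hzp =>
    by_contra fun haz => hzp ((hmax ⟨hbp.trans hpz, haz⟩ hpz).antisymm hpz)
  refine ⟨p, ⟨fun hp => hap (le_sup_left.trans (hp le_sup_right)), fun x y hxy => ?_⟩, hbp, hap⟩
  by_contra! hne
  exact hap (hxy ▸ le_inf (above_of_gt x (hxy ▸ inf_le_left) hne.1)
    (above_of_gt y (hxy ▸ inf_le_right) hne.2))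

section Coordinatization

variable {P ι : Type*} (m : P → ι → ℕ)

open Classical in
/-- The exponent vector of the monomial `∏_{p ∈ ⌈b⌉ᶜ} m p`. -/
noncomputable def coordinatization [Fintype P] [Preorder P] (b : P) : ι → ℕ :=
  ∑ p ∈ univ.filter (fun p => ¬b ≤ p), m p

variable {m}

theorem not_le_of_apply_ne_zero [Preorder P] (hm : ∀ p q, m p ⊓ m q ≠ 0 → p ≤ q ∨ q ≤ p)
    {a b p q : P} {i : ι} (hpi : m p i ≠ 0) (hqi : m q i ≠ 0) (hbp : b ≤ p) (hap : ¬a ≤ p)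
    (hbq : ¬b ≤ q) : ¬a ≤ q := by
  have hpq : m p ⊓ m q ≠ 0 := Function.ne_iff.mpr ⟨i, by simp [hpi, hqi]⟩
  rcases hm p q hpq with hpq | hqp
  · exact absurd (hbp.trans hpq) hbq
  · exact fun haq => hap (haq.trans hqp)

theorem coordinatization_apply_lt [Fintype P] [Preorder P]
    (hm : ∀ p q, m p ⊓ m q ≠ 0 → p ≤ q ∨ q ≤ p) {a b p : P} {i : ι} (hpi : m p i ≠ 0)
    (hbp : b ≤ p) (hap : ¬a ≤ p) : coordinatization m b i < coordinatization m a i := by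
  classical
  simp only [coordinatization, Finset.sum_apply, sum_filter]
  refine sum_lt_sum (fun q _ => ?_)
    ⟨p, mem_univ p, by simp [hbp, hap, pos_iff_ne_zero, hpi]⟩
  by_cases hbq : b ≤ q
  · simp [hbq]
  by_cases hqi : m q i = 0
  · simp [hqi]
  · simp [hbq, not_le_of_apply_ne_zero hm hpi hqi hbp hap hbq]

theorem coordinatization_le_coordinatization_iff [Fintype P] [Lattice P]
    (hirr : ∀ p, InfIrred p → m p ≠ 0) (hm : ∀ p q, m p ⊓ m q ≠ 0 → p ≤ q ∨ q ≤ p) {a b : P} :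
    coordinatization m a ≤ coordinatization m b ↔ a ≤ b := by
  refine ⟨fun hle => ?_, fun hab => ?_⟩
  · by_contra hab
    obtain ⟨p, hp, hbp, hap⟩ := exists_infIrred_of_not_le hab
    obtain ⟨i, hi⟩ := Function.ne_iff.mp (hirr p hp)
    exact (coordinatization_apply_lt hm hi hbp hap).not_ge (hle i)
  · exact sum_le_sum_of_subset (fun q => by simpa using mt hab.trans)

end Coordinatization

open Classical in
theorem stmt_17_general (k : ℕ) (P : Type) [Fintype P] [Lattice P]
    (m : P → (Fin k → ℕ))
    (h1 : ∀ p : P, (∀ a b : P, p < a → p < b → a ⊓ b ≠ p) → m p ≠ 0)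
    (h2 : ∀ p q : P, m p ⊓ m q ≠ 0 → p ≤ q ∨ q ≤ p)
    (f : P → (Fin k → ℕ))
    (hf : ∀ b : P, f b = ∑ p ∈ Finset.univ.filter (fun p : P => ¬ b ≤ p), m p) :
    Function.Injective f := by
  obtain rfl : f = coordinatization m := funext hf
  have hirr : ∀ p, InfIrred p → m p ≠ 0 := fun p hp =>
    h1 p fun x y hx hy hxy => (hp.2 hxy).elim hx.ne' hy.ne'
  exact (OrderEmbedding.ofMapLEIff _ fun _ _ =>
    coordinatization_le_coordinatization_iff hirr h2).injective

open Classical in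
/-- With the hypotheses of the coordinatization theorem (monomials as exponent vectors
`Fin k → ℕ`; every meet-irreducible is non-trivially labeled; elements whose labels
share a variable are comparable), the map `f b = ∏_{p ∈ ⌈b⌉ᶜ} m p` is injective on the
finite atomic lattice `P`. -/
theorem stmt_17 (k : ℕ) (P : Type) [Fintype P] [Lattice P] [OrderBot P]
    (hatomic : ∀ b : P, IsLUB {a : P | IsAtom a ∧ a ≤ b} b)
    (m : P → (Fin k → ℕ))
    (h1 : ∀ p : P, (∀ a b : P, p < a → p < b → a ⊓ b ≠ p) → m p ≠ 0)
    (h2 : ∀ p q : P, m p ⊓ m q ≠ 0 → p ≤ q ∨ q ≤ p)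
    (f : P → (Fin k → ℕ))
    (hf : ∀ b : P, f b = ∑ p ∈ Finset.univ.filter (fun p : P => ¬ b ≤ p), m p) :
    Function.Injective f :=
  stmt_17_general k P m h1 h2 f hf
end
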